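/- Let n be a natural number. In the group M* of units of the monoid (M_n(ℤ), *): the set M_0 of matrices with zero diagonal is a normal subgroup of M* isomorphic to ℤ^{n(n−1)} (with * restricted to M_0 being matrix addition), the set M_d* = M* ∩ M_d of diagonal units is a subgroup isomorphic to C_2^n, every element of M* factors as 𝔞 = 𝔞_0 * 𝔞_d with 𝔞_0 ∈ M_0 and 𝔞_d ∈ M_d*, and M_0 ∩ M_d* is trivial; that is, M* is the internal semidirect product of M_0 by M_d*. -/

import Mathlib

/-- A type synonym for `M = M_n(ℤ)`, carrying the monoid structure given by
`𝔞 * 𝔟 = [c_ij]` with `c_ij = a_ij + (1 + 2 a_jj) b_ij`. -/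
def MM (n : ℕ) : Type := Matrix (Fin n) (Fin n) ℤ

instance (n : ℕ) : Mul (MM n) :=
  ⟨fun 𝔞 𝔟 i j => 𝔞 i j + (1 + 2 * 𝔞 j j) * 𝔟 i j⟩

instance (n : ℕ) : One (MM n) := ⟨fun _ _ => (0 : ℤ)⟩

theorem MM.mul_apply {n : ℕ} (𝔞 𝔟 : MM n) (i j : Fin n) :
    (𝔞 * 𝔟) i j = 𝔞 i j + (1 + 2 * 𝔞 j j) * 𝔟 i j := rfl

theorem MM.one_apply {n : ℕ} (i j : Fin n) : (1 : MM n) i j = 0 := rfl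

theorem MM.ext {n : ℕ} {𝔞 𝔟 : MM n} (h : ∀ i j, 𝔞 i j = 𝔟 i j) : 𝔞 = 𝔟 :=
  funext fun i => funext fun j => h i j

instance (n : ℕ) : Monoid (MM n) where
  mul_assoc a b c := MM.ext fun i j => by
    simp only [MM.mul_apply]; ring
  one_mul a := MM.ext fun i j => by simp only [MM.mul_apply, MM.one_apply]; ring
  mul_one a := MM.ext fun i j => by simp only [MM.mul_apply, MM.one_apply]; ring

/-!
In `𝔞 * 𝔟` column `j` of `𝔟` undergoes the affine map `x ↦ a_ij + (1 + 2 a_jj) x`, so the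
slopes `1 + 2 a_jj` form a multiplicative character `M → ℤⁿ`. A unit therefore has slopes
`±1`, i.e. diagonal entries in `{0, -1}`, and conversely such a matrix is inverted by
`b_ij = -(1 + 2 a_jj) a_ij`. `M_0` is the kernel of this character on `M*`, hence normal, and on
it `*` is entrywise addition. A unit has the same slopes as its diagonal part `d`, which gives the
factorisation through `u * d⁻¹ ∈ M_0`; diagonal units are determined by their diagonal modulo 2,
and reduction modulo 2 of the diagonal is additive.
-/

namespace MM

variable {n : ℕ}

def diagFactor : MM n →* (Fin n → ℤ) where
  toFun a j := 1 + 2 * a j j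
  map_one' := funext fun _ => by simp [one_apply]
  map_mul' a b := funext fun j => by simp only [mul_apply, Pi.mul_apply]; ring

theorem diagFactor_apply (a : MM n) (j : Fin n) : diagFactor a j = 1 + 2 * a j j := rfl

theorem mul_apply_of_apply_self_eq_zero (a b : MM n) {i j : Fin n} (h : a j j = 0) :
    (a * b) i j = a i j + b i j := by
  rw [mul_apply, h]; ring

def unitInv (a : MM n) : MM n := fun i j => -(1 + 2 * a j j) * a i j

theorem mul_unitInv {a : MM n} (ha : ∀ i, a i i = 0 ∨ a i i = -1) : a * unitInv a = 1 :=
  ext fun i j => by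
    simp only [mul_apply, unitInv, one_apply]
    rcases ha j with h | h <;> rw [h] <;> ring

theorem unitInv_mul {a : MM n} (ha : ∀ i, a i i = 0 ∨ a i i = -1) : unitInv a * a = 1 :=
  ext fun i j => by
    simp only [mul_apply, unitInv, one_apply]
    rcases ha j with h | h <;> rw [h] <;> ring

def mkUnit (a : MM n) (ha : ∀ i, a i i = 0 ∨ a i i = -1) : (MM n)ˣ :=
  ⟨a, unitInv a, mul_unitInv ha, unitInv_mul ha⟩

theorem isUnit_iff {a : MM n} : IsUnit a ↔ ∀ i, a i i = 0 ∨ a i i = -1 := by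
  refine ⟨fun ha i => ?_, fun ha => ⟨mkUnit a ha, rfl⟩⟩
  have : IsUnit (1 + 2 * a i i) := Pi.isUnit_iff.mp (ha.map diagFactor) i
  rcases Int.isUnit_iff.mp this with h | h <;> omega

theorem apply_self_of_unit (u : (MM n)ˣ) (i : Fin n) :
    (u : MM n) i i = 0 ∨ (u : MM n) i i = -1 :=
  isUnit_iff.mp u.isUnit i

theorem coe_inv (u : (MM n)ˣ) : ((u⁻¹ : (MM n)ˣ) : MM n) = unitInv u :=
  Units.inv_eq_of_mul_eq_one_right (mul_unitInv (apply_self_of_unit u))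

def zeroDiag (n : ℕ) : Subgroup (MM n)ˣ := (Units.map (diagFactor (n := n))).ker

theorem mem_zeroDiag {u : (MM n)ˣ} : u ∈ zeroDiag n ↔ ∀ i, (u : MM n) i i = 0 := by
  simp only [zeroDiag, MonoidHom.mem_ker, Units.ext_iff, Units.coe_map, Units.val_one,
    funext_iff, diagFactor_apply, Pi.one_apply]
  exact forall_congr' fun i => by omega

def diagUnits (n : ℕ) : Subgroup (MM n)ˣ where
  carrier := {u | ∀ i j, i ≠ j → (u : MM n) i j = 0}
  one_mem' _ _ _ := rfl
  mul_mem' {u v} hu hv i j hij := by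
    simp only [Units.val_mul, mul_apply, hu i j hij, hv i j hij]; ring
  inv_mem' {u} hu i j hij := by
    simp only [coe_inv, unitInv, hu i j hij]; ring

theorem mem_diagUnits {u : (MM n)ˣ} : u ∈ diagUnits n ↔ ∀ i j, i ≠ j → (u : MM n) i j = 0 :=
  Iff.rfl

theorem eq_one_of_mem_zeroDiag_of_mem_diagUnits {u : (MM n)ˣ} (h0 : u ∈ zeroDiag n)
    (hd : u ∈ diagUnits n) : u = 1 :=
  Units.ext <| ext fun i j => by
    rcases eq_or_ne i j with rfl | hij
    · exact mem_zeroDiag.1 h0 i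
    · exact hd i j hij

theorem zeroDiag_inf_diagUnits : zeroDiag n ⊓ diagUnits n = ⊥ :=
  eq_bot_iff.2 fun _ ⟨h0, hd⟩ => eq_one_of_mem_zeroDiag_of_mem_diagUnits h0 hd

def ofOffDiag (f : {p : Fin n × Fin n // p.1 ≠ p.2} → ℤ) : MM n :=
  fun i j => if h : i = j then 0 else f ⟨(i, j), h⟩

theorem ofOffDiag_apply_self (f : {p : Fin n × Fin n // p.1 ≠ p.2} → ℤ) (i : Fin n) :
    ofOffDiag f i i = 0 :=
  dif_pos rfl

def zeroDiagEquiv : zeroDiag n ≃* Multiplicative ({p : Fin n × Fin n // p.1 ≠ p.2} → ℤ) where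
  toFun u := .ofAdd fun p => ((u : (MM n)ˣ) : MM n) p.1.1 p.1.2
  invFun f := ⟨mkUnit (ofOffDiag f.toAdd) fun i => .inl (ofOffDiag_apply_self _ i),
    mem_zeroDiag.2 (ofOffDiag_apply_self _)⟩
  left_inv u := Subtype.ext <| Units.ext <| ext fun i j => by
    rcases eq_or_ne i j with rfl | hij
    · exact (ofOffDiag_apply_self _ i).trans (mem_zeroDiag.1 u.2 i).symm
    · exact dif_neg hij
  right_inv f := funext fun p => dif_neg (c := p.1.1 = p.1.2) p.2
  map_mul' u v := funext fun p => mul_apply_of_apply_self_eq_zero _ _ (mem_zeroDiag.1 u.2 _)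

theorem card_offDiag : Fintype.card {p : Fin n × Fin n // p.1 ≠ p.2} = n * (n - 1) := by
  have : Finset.univ.filter (fun p : Fin n × Fin n => p.1 ≠ p.2) = Finset.univ.offDiag := by
    ext; simp
  rw [Fintype.card_subtype, this, Finset.offDiag_card, Finset.card_univ, Fintype.card_fin,
    Nat.mul_sub_one]

def diagonalUnit (d : Fin n → ℤ) (hd : ∀ i, d i = 0 ∨ d i = -1) : (MM n)ˣ :=
  mkUnit (Matrix.diagonal d) fun i => by simpa using hd i

theorem diagonalUnit_apply_self (d : Fin n → ℤ) (hd : ∀ i, d i = 0 ∨ d i = -1) (i : Fin n) :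
    (diagonalUnit d hd : MM n) i i = d i :=
  Matrix.diagonal_apply_eq d i

theorem diagonalUnit_mem_diagUnits (d : Fin n → ℤ) (hd : ∀ i, d i = 0 ∨ d i = -1) :
    diagonalUnit d hd ∈ diagUnits n :=
  fun _ _ => Matrix.diagonal_apply_ne d

def diagParity : MM n →* (Fin n → Multiplicative (ZMod 2)) where
  toFun a j := .ofAdd (a j j : ZMod 2)
  map_one' := funext fun _ => by simp [one_apply]
  map_mul' a b := funext fun j => by
    simp only [mul_apply, Pi.mul_apply, ← ofAdd_add]
    congr 1
    push_cast
    rw [show (2 : ZMod 2) = 0 from rfl]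
    ring

theorem diagParity_apply (a : MM n) (j : Fin n) : diagParity a j = .ofAdd (a j j : ZMod 2) := rfl

noncomputable def diagUnitsEquiv : diagUnits n ≃* (Fin n → Multiplicative (ZMod 2)) :=
  MulEquiv.ofBijective ((diagParity.comp (Units.coeHom (MM n))).comp (diagUnits n).subtype) <| by
    refine ⟨(injective_iff_map_eq_one _).2 fun u hu => ?_, fun f => ?_⟩
    · refine Subtype.ext (eq_one_of_mem_zeroDiag_of_mem_diagUnits (mem_zeroDiag.2 fun i => ?_) u.2)
      have : (((u : (MM n)ˣ) : MM n) i i : ZMod 2) = 0 := congrFun hu i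
      rcases apply_self_of_unit (u : (MM n)ˣ) i with h | h <;> simp_all
    · have hd (i : Fin n) : -((f i).toAdd.val : ℤ) = 0 ∨ -((f i).toAdd.val : ℤ) = -1 := by
        have := ZMod.val_lt (f i).toAdd
        omega
      refine ⟨⟨diagonalUnit _ hd, diagonalUnit_mem_diagUnits _ hd⟩, funext fun i => ?_⟩
      change Multiplicative.ofAdd (((diagonalUnit _ hd : MM n) i i : ℤ) : ZMod 2) = f i
      simp [diagonalUnit_apply_self, ZMod.neg_eq_self_mod_two]

noncomputable def zeroDiagEquivFin : zeroDiag n ≃* Multiplicative (Fin (n * (n - 1)) → ℤ) :=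
  zeroDiagEquiv.trans <| AddEquiv.toMultiplicative <|
    AddEquiv.arrowCongr (Fintype.equivFinOfCardEq card_offDiag) (AddEquiv.refl ℤ)

theorem exists_mul_eq (u : (MM n)ˣ) : ∃ a ∈ zeroDiag n, ∃ d ∈ diagUnits n, u = a * d := by
  let d := diagonalUnit (fun i => (u : MM n) i i) (apply_self_of_unit u)
  refine ⟨u * d⁻¹, ?_, d, diagonalUnit_mem_diagUnits _ _, (inv_mul_cancel_right u d).symm⟩
  rw [zeroDiag, MonoidHom.mem_ker, map_mul, map_inv, mul_inv_eq_one]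
  ext j
  simp [d, diagFactor_apply, diagonalUnit_apply_self]

end MM

theorem stmt5 (n : ℕ) :
    ∃ H0 Hd : Subgroup (MM n)ˣ,
      (∀ u : (MM n)ˣ, u ∈ H0 ↔ ∀ i, (u : MM n) i i = 0) ∧
      (∀ u : (MM n)ˣ, u ∈ Hd ↔ ∀ i j, i ≠ j → (u : MM n) i j = 0) ∧
      H0.Normal ∧
      (∀ u v : (MM n)ˣ, u ∈ H0 → v ∈ H0 →
        ∀ i j, ((u * v : (MM n)ˣ) : MM n) i j = (u : MM n) i j + (v : MM n) i j) ∧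
      Nonempty (H0 ≃* Multiplicative (Fin (n * (n - 1)) → ℤ)) ∧
      Nonempty (Hd ≃* (Fin n → Multiplicative (ZMod 2))) ∧
      (∀ u : (MM n)ˣ, ∃ a ∈ H0, ∃ d ∈ Hd, u = a * d) ∧
      H0 ⊓ Hd = ⊥ := by
  refine ⟨MM.zeroDiag n, MM.diagUnits n, fun _ => MM.mem_zeroDiag, fun _ => MM.mem_diagUnits,
    MonoidHom.normal_ker _, fun u v hu _ i j => ?_, ⟨MM.zeroDiagEquivFin⟩, ⟨MM.diagUnitsEquiv⟩,
    MM.exists_mul_eq, MM.zeroDiag_inf_diagUnits⟩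
  exact MM.mul_apply_of_apply_self_eq_zero _ _ (MM.mem_zeroDiag.1 hu j)
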